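/- (Theorem 1(2)) The rewrite system (1)-(7) is strongly normalizing with unique normal forms: every sequence of one-step rewrites from a term eventually terminates, and every term rewrites to a unique normal form (unique modulo associativity of *). -/

import Mathlib

/-- Terms of the free (quasi-)Cartesian monoid: constants `I, L, R`,
composition `comp` (written `*` in the paper) and pairing `pair`. -/
inductive Term : Type
  | I : Term
  | L : Term
  | R : Term
  | comp : Term → Term → Term
  | pair : Term → Term → Term
  deriving DecidableEq

open Term

/-- The rewrite rules (1)-(7), indexed by their number. -/
inductive Rule : ℕ → Term → Term → Prop
  | r1 (x y : Term) : Rule 1 (comp L (pair x y)) x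
  | r2 (x y : Term) : Rule 2 (comp R (pair x y)) y
  | r3 (x y z : Term) : Rule 3 (comp (pair x y) z) (pair (comp x z) (comp y z))
  | r4 (x : Term) : Rule 4 (comp I x) x
  | r5 (x : Term) : Rule 5 (comp x I) x
  | r6 (x : Term) : Rule 6 (pair (comp L x) (comp R x)) x
  | r7 : Rule 7 (pair L R) I

/-- The congruence generated by associativity of `comp`. -/
inductive AssocEq : Term → Term → Prop
  | assoc (a b c : Term) : AssocEq (comp (comp a b) c) (comp a (comp b c))
  | refl (a : Term) : AssocEq a a
  | symm {a b : Term} : AssocEq a b → AssocEq b a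
  | trans {a b c : Term} : AssocEq a b → AssocEq b c → AssocEq a c
  | comp_congr {a a' b b' : Term} :
      AssocEq a a' → AssocEq b b' → AssocEq (comp a b) (comp a' b')
  | pair_congr {a a' b b' : Term} :
      AssocEq a a' → AssocEq b b' → AssocEq (pair a b) (pair a' b')

/-- One-step rewriting by a rule whose index lies in `J`,
closed under replacement of subterms (monotone closure). -/
inductive Step (J : Set ℕ) : Term → Term → Prop
  | rule {n : ℕ} {x y : Term} : n ∈ J → Rule n x y → Step J x y
  | comp_left {a a' b : Term} : Step J a a' → Step J (comp a b) (comp a' b)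
  | comp_right {a b b' : Term} : Step J b b' → Step J (comp a b) (comp a b')
  | pair_left {a a' b : Term} : Step J a a' → Step J (pair a b) (pair a' b)
  | pair_right {a b b' : Term} : Step J b b' → Step J (pair a b) (pair a b')

/-- One-step rewriting modulo associativity. -/
def StepA (J : Set ℕ) (a b : Term) : Prop :=
  ∃ a' b', AssocEq a a' ∧ Step J a' b' ∧ AssocEq b' b

/-- Many-step rewriting `↠_J`: the monotone reflexive transitive closure of
one-step rewriting by the rules in `J`, modulo associativity. -/
def Red (J : Set ℕ) (a b : Term) : Prop :=
  ∃ c, Relation.ReflTransGen (StepA J) a c ∧ AssocEq c b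

/-- `a` is in normal form w.r.t. the rules in `J` (modulo associativity). -/
def NF (J : Set ℕ) (a : Term) : Prop := ∀ b, ¬ StepA J a b

/-- Rules (1)-(7). -/
def rules17 : Set ℕ := {n | 1 ≤ n ∧ n ≤ 7}
/-- Rules (1)-(5). -/
def rules15 : Set ℕ := {n | 1 ≤ n ∧ n ≤ 5}
/-- Rules (1)-(4). -/
def rules14 : Set ℕ := {n | 1 ≤ n ∧ n ≤ 4}
/-- Rules (5), (6), (7). -/
def rules567 : Set ℕ := {5, 6, 7}

/-- The congruence `=_CM` generated by the Cartesian monoid axioms (i)-(iv)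
and the monoid axioms for `comp` with unit `I`. -/
inductive CMEq : Term → Term → Prop
  | proj_left (f g : Term) : CMEq (comp L (pair f g)) f
  | proj_right (f g : Term) : CMEq (comp R (pair f g)) g
  | lift (f g h : Term) : CMEq (comp (pair f g) h) (pair (comp f h) (comp g h))
  | surj : CMEq (pair L R) I
  | assoc (a b c : Term) : CMEq (comp (comp a b) c) (comp a (comp b c))
  | one_mul (a : Term) : CMEq (comp I a) a
  | mul_one (a : Term) : CMEq (comp a I) a
  | refl (a : Term) : CMEq a a
  | symm {a b : Term} : CMEq a b → CMEq b a
  | trans {a b c : Term} : CMEq a b → CMEq b c → CMEq a c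
  | comp_congr {a a' b b' : Term} :
      CMEq a a' → CMEq b b' → CMEq (comp a b) (comp a' b')
  | pair_congr {a a' b b' : Term} :
      CMEq a a' → CMEq b b' → CMEq (pair a b) (pair a' b')

/-- The congruence `=_CQ` generated by the axioms (i)-(iii)
and the monoid axioms (no surjectivity `⟨L,R⟩ = I`). -/
inductive CQEq : Term → Term → Prop
  | proj_left (f g : Term) : CQEq (comp L (pair f g)) f
  | proj_right (f g : Term) : CQEq (comp R (pair f g)) g
  | lift (f g h : Term) : CQEq (comp (pair f g) h) (pair (comp f h) (comp g h))
  | assoc (a b c : Term) : CQEq (comp (comp a b) c) (comp a (comp b c))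
  | one_mul (a : Term) : CQEq (comp I a) a
  | mul_one (a : Term) : CQEq (comp a I) a
  | refl (a : Term) : CQEq a a
  | symm {a b : Term} : CQEq a b → CQEq b a
  | trans {a b c : Term} : CQEq a b → CQEq b c → CQEq a c
  | comp_congr {a a' b b' : Term} :
      CQEq a a' → CQEq b b' → CQEq (comp a b) (comp a' b')
  | pair_congr {a a' b b' : Term} :
      CQEq a a' → CQEq b b' → CQEq (pair a b) (pair a' b')

/-- An injective numerical encoding of terms, used to state computability. -/
def encodeTerm : Term → ℕ
  | I => 0
  | L => 1
  | R => 2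
  | comp a b => 2 * Nat.pair (encodeTerm a) (encodeTerm b) + 3
  | pair a b => 2 * Nat.pair (encodeTerm a) (encodeTerm b) + 4

/-- A numerical encoding of finite lists of terms. -/
def encodeTermList : List Term → ℕ
  | [] => 0
  | a :: l => Nat.pair (encodeTerm a) (encodeTermList l) + 1

/-- The product of a list of terms (with `I` as the empty product). -/
def listProd : List Term → Term
  | [] => I
  | a :: l => comp a (listProd l)

/-- `=_CQ` as a setoid. -/
def cqSetoid : Setoid Term :=
  ⟨CQEq, ⟨fun a => CQEq.refl a, fun h => h.symm, fun h₁ h₂ => h₁.trans h₂⟩⟩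

/-- The free categorical quasiproduct monoid `CQ = T / =_CQ`. -/
def CQ : Type := Quotient cqSetoid

/-- `=_CM` as a setoid. -/
def cmSetoid : Setoid Term :=
  ⟨CMEq, ⟨fun a => CMEq.refl a, fun h => h.symm, fun h₁ h₂ => h₁.trans h₂⟩⟩

/-- The free Cartesian monoid `CM = T / =_CM`. -/
def CM : Type := Quotient cmSetoid

/-- The submonoid of `CQ` generated by (the classes of) the members of `B`,
as a set of elements of `CQ`. -/
def genSubmonoidCQ (B : List Term) : Set CQ :=
  {x | ∃ l : List Term, (∀ t ∈ l, t ∈ B) ∧ Quotient.mk cqSetoid (listProd l) = x}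

/-- The submonoid of `CM` generated by (the classes of) the members of `B`,
as a set of elements of `CM`. -/
def genSubmonoidCM (B : List Term) : Set CM :=
  {x | ∃ l : List Term, (∀ t ∈ l, t ∈ B) ∧ Quotient.mk cmSetoid (listProd l) = x}

/-- A shift: a product (under `comp`) of copies of `L` and `R`,
with `I` as the empty product. -/
inductive IsShift : Term → Prop
  | unit : IsShift I
  | left : IsShift L
  | right : IsShift R
  | comp {s t : Term} : IsShift s → IsShift t → IsShift (comp s t)

/-- The CQ normal form (normal form w.r.t. rules (1)-(5)) of `X` is a shift. -/
def nfIsShift (X : Term) : Prop :=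
  ∃ N, Red rules15 X N ∧ NF rules15 N ∧ IsShift N

/-- The product `F_0 * ⋯ * F_{n-1}` of the first `n` values of a sequence. -/
def prodTake (f : ℕ → Term) (n : ℕ) : Term := listProd ((List.range n).map f)

/-- `B` covers Cantor space: there is an infinite sequence of members of `B`
such that for each shift `S` some finite initial product composed with `S`
has a CQ normal form that is not a shift. -/
def Covers (B : List Term) : Prop :=
  ∃ f : ℕ → Term, (∀ n, f n ∈ B) ∧
    ∀ S, IsShift S → ∃ n, ¬ nfIsShift (comp S (prodTake f n))

/-- The shift `S` is bad for `B`: for every finite sequence of members of `B`,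
the CQ normal form of `S*F_1*⋯*F_n` is a shift. -/
def BadFor (B : List Term) (S : Term) : Prop :=
  ∀ l : List Term, (∀ t ∈ l, t ∈ B) → nfIsShift (comp S (listProd l))

/-- The length of a shift: the number of occurrences of `L` and `R`. -/
def lenLR : Term → ℕ
  | I => 0
  | L => 1
  | R => 1
  | comp a b => lenLR a + lenLR b
  | pair a b => lenLR a + lenLR b

/-- `S` is extenuative for `B`: it is bad for `B` and the CQ normal forms of
`S*F_1*⋯*F_k` (for `F_i` in `B`) have unbounded length. -/
def Extenuative (B : List Term) (S : Term) : Prop :=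
  BadFor B S ∧ ∀ n : ℕ, ∃ l : List Term, (∀ t ∈ l, t ∈ B) ∧
    ∃ N, Red rules15 (comp S (listProd l)) N ∧ NF rules15 N ∧ n ≤ lenLR N

/-- A term represents a right invertible element of CM. -/
def RightInvCM (F : Term) : Prop := ∃ G, CMEq (comp F G) I

/-! Termination: the weight below interprets `*` as multiplication and `⟨-,-⟩` as `a + b + 1`
over numbers `≥ 2`, so it is invariant under associativity and drops under every rule.
Uniqueness: `nf` computes the normal form by evaluating terms with `compNF` and `pairNF`,
composition and pairing restricted to normal forms. It is invariant under associativity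
and under every rule, and every term reduces to its value, so two normal forms of `t`
are both associativity-equivalent to `nf t`. That they are normal at all is seen on
right-associated representatives: a normal form is a tree of pairs over `I` and
nonempty words in `L, R`, and flattening any reducible term exposes a redex. -/

def weight : Term → ℕ
  | I | L | R => 2
  | comp a b => weight a * weight b
  | pair a b => weight a + weight b + 1

lemma two_le_weight (t : Term) : 2 ≤ weight t := by
  induction t with
  | comp a b iha ihb => exact le_trans (by norm_num) (Nat.mul_le_mul iha ihb)
  | pair a b iha _ => simp only [weight]; omega
  | _ => exact le_rfl

lemma AssocEq.weight_eq {a b : Term} (h : AssocEq a b) : weight a = weight b := by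
  induction h with
  | assoc a b c => exact Nat.mul_assoc _ _ _
  | refl => rfl
  | symm _ ih => exact ih.symm
  | trans _ _ ih₁ ih₂ => exact ih₁.trans ih₂
  | comp_congr _ _ ih₁ ih₂ | pair_congr _ _ ih₁ ih₂ => simp only [weight, ih₁, ih₂]

lemma Rule.weight_lt {n : ℕ} {s t : Term} : Rule n s t → weight t < weight s
  | r1 x y | r2 x y => by simp only [weight]; nlinarith [two_le_weight x, two_le_weight y]
  | r3 x y z => by simp only [weight]; nlinarith [two_le_weight z]
  | r4 x | r5 x | r6 x => by simp only [weight]; nlinarith [two_le_weight x]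
  | r7 => by simp only [weight]; norm_num

lemma Step.weight_lt {J : Set ℕ} {a b : Term} (h : Step J a b) : weight b < weight a := by
  induction h with
  | rule _ hr => exact hr.weight_lt
  | @comp_left _ _ b _ ih => simp only [weight]; nlinarith [two_le_weight b]
  | @comp_right a _ _ _ ih => simp only [weight]; nlinarith [two_le_weight a]
  | pair_left _ ih | pair_right _ ih => simp only [weight]; omega

lemma StepA.weight_lt {J : Set ℕ} {a b : Term} (h : StepA J a b) : weight b < weight a := by
  obtain ⟨a', b', ha, hs, hb⟩ := h
  rw [ha.weight_eq, ← hb.weight_eq]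
  exact hs.weight_lt

theorem wellFounded_flip_stepA (J : Set ℕ) : WellFounded (flip (StepA J)) :=
  Subrelation.wf (fun h => h.weight_lt) (InvImage.wf weight wellFounded_lt)

inductive IsWord : Term → Prop
  | left : IsWord L
  | right : IsWord R
  | consL {w : Term} : IsWord w → IsWord (comp L w)
  | consR {w : Term} : IsWord w → IsWord (comp R w)

def IsSurjPair (a b : Term) : Prop :=
  (a = L ∧ b = R) ∨ ∃ x, a = comp L x ∧ b = comp R x

inductive IsNF : Term → Prop
  | unit : IsNF I
  | word {w : Term} : IsWord w → IsNF w
  | pairing {a b : Term} : IsNF a → IsNF b → ¬ IsSurjPair a b → IsNF (pair a b)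

lemma IsNF.of_pair {a b : Term} (h : IsNF (pair a b)) :
    IsNF a ∧ IsNF b ∧ ¬ IsSurjPair a b := by
  rcases h with _ | ⟨⟨⟩⟩ | ⟨ha, hb, hs⟩
  exact ⟨ha, hb, hs⟩

lemma IsNF.isWord_of_comp {a b : Term} (h : IsNF (comp a b)) : IsWord (comp a b) := by
  rcases h with _ | ⟨hw⟩
  exact hw

def flatComp : Term → Term → Term
  | comp a b, c => comp a (flatComp b c)
  | a, c => comp a c

def flat : Term → Term
  | comp a b => flatComp (flat a) (flat b)
  | pair a b => pair (flat a) (flat b)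
  | t => t

lemma flatComp_assoc (a b c : Term) : flatComp (flatComp a b) c = flatComp a (flatComp b c) := by
  induction a with
  | comp _ _ _ ih => simp only [flatComp, ih]
  | _ => rfl

lemma AssocEq.flat_eq {a b : Term} (h : AssocEq a b) : flat a = flat b := by
  induction h with
  | assoc a b c => exact flatComp_assoc _ _ _
  | refl => rfl
  | symm _ ih => exact ih.symm
  | trans _ _ ih₁ ih₂ => exact ih₁.trans ih₂
  | comp_congr _ _ ih₁ ih₂ | pair_congr _ _ ih₁ ih₂ => simp only [flat, ih₁, ih₂]

lemma IsWord.flat_eq {w : Term} (h : IsWord w) : flat w = w := by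
  induction h with
  | left | right => rfl
  | consL _ ih | consR _ ih => simp only [flat, ih, flatComp]

lemma IsNF.flat_eq {t : Term} (h : IsNF t) : flat t = t := by
  induction h with
  | unit => rfl
  | word hw => exact hw.flat_eq
  | pairing _ _ _ iha ihb => simp only [flat, iha, ihb]

lemma IsWord.of_flatComp {a c : Term} (h : IsWord (flatComp a c)) : IsWord a ∧ IsWord c := by
  induction a with
  | comp a₁ a₂ _ ih =>
    rcases h with _ | _ | hw | hw <;> obtain ⟨ha₂, hc⟩ := ih hw
    · exact ⟨ha₂.consL, hc⟩
    · exact ⟨ha₂.consR, hc⟩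
  | L => rcases h with _ | _ | hc; exact ⟨.left, hc⟩
  | R => rcases h with _ | _ | _ | hc; exact ⟨.right, hc⟩
  | I | pair => cases h

lemma IsNF.isWord_of_flatComp {a c : Term} (h : IsNF (flatComp a c)) : IsWord a ∧ IsWord c := by
  refine IsWord.of_flatComp ?_
  cases a <;> exact h.isWord_of_comp

lemma Rule.not_isNF_flat {n : ℕ} {s t : Term} : Rule n s t → ¬ IsNF (flat s)
  | r1 _ _ | r2 _ _ => fun h => nomatch h.isWord_of_flatComp.2
  | r3 _ _ _ | r4 _ => fun h => nomatch h.isWord_of_flatComp.1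
  | r5 _ => fun h => nomatch h.isWord_of_flatComp.2
  | r6 x => fun h => h.of_pair.2.2 (.inr ⟨flat x, rfl, rfl⟩)
  | r7 => fun h => h.of_pair.2.2 (.inl ⟨rfl, rfl⟩)

lemma Step.not_isNF_flat {J : Set ℕ} {a b : Term} (h : Step J a b) : ¬ IsNF (flat a) := by
  induction h with
  | rule _ hr => exact hr.not_isNF_flat
  | comp_left _ ih => exact fun h => ih (.word h.isWord_of_flatComp.1)
  | comp_right _ ih => exact fun h => ih (.word h.isWord_of_flatComp.2)
  | pair_left _ ih => exact fun h => ih h.of_pair.1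
  | pair_right _ ih => exact fun h => ih h.of_pair.2.1

lemma IsNF.toNF {J : Set ℕ} {t : Term} (h : IsNF t) : NF J t := by
  rintro u ⟨t', u', ht, hs, -⟩
  exact hs.not_isNF_flat (ht.flat_eq ▸ h.flat_eq.symm ▸ h)

def pairNF : Term → Term → Term
  | L, R => I
  | comp L x, comp R y => if x = y then x else pair (comp L x) (comp R y)
  | a, b => pair a b

def compNF : Term → Term → Term
  | I, b => b
  | L, b => match b with
    | I => L
    | pair x _ => x
    | b => comp L b
  | R, b => match b with
    | I => R
    | pair _ y => y
    | b => comp R b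
  | pair x y, b => pairNF (compNF x b) (compNF y b)
  | comp a₁ a₂, b => compNF a₁ (compNF a₂ b)

def nf : Term → Term
  | I => I
  | L => L
  | R => R
  | comp a b => compNF (nf a) (nf b)
  | pair a b => pairNF (nf a) (nf b)

lemma pairNF_of_not_isSurjPair {a b : Term} (h : ¬ IsSurjPair a b) : pairNF a b = pair a b := by
  unfold pairNF
  split
  · exact absurd (.inl ⟨rfl, rfl⟩) h
  · rename_i x y
    have hxy : x ≠ y := by rintro rfl; exact h (.inr ⟨x, rfl, rfl⟩)
    simp only [hxy, if_false]
  · rfl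

lemma pairNF_cases (a b : Term) :
    (a = L ∧ b = R ∧ pairNF a b = I) ∨
    (∃ x, a = comp L x ∧ b = comp R x ∧ pairNF a b = x) ∨
    (¬ IsSurjPair a b ∧ pairNF a b = pair a b) := by
  by_cases hs : IsSurjPair a b
  · rcases hs with ⟨rfl, rfl⟩ | ⟨x, rfl, rfl⟩
    · exact .inl ⟨rfl, rfl, rfl⟩
    · exact .inr (.inl ⟨x, rfl, rfl, by simp only [pairNF, if_true]⟩)
  · exact .inr (.inr ⟨hs, pairNF_of_not_isSurjPair hs⟩)

lemma IsWord.of_comp {p w : Term} (h : IsWord (comp p w)) : IsWord w := by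
  cases h <;> assumption

lemma IsWord.compNF_L {w : Term} (h : IsWord w) : compNF L w = comp L w := by
  cases h <;> rfl

lemma IsWord.compNF_R {w : Term} (h : IsWord w) : compNF R w = comp R w := by
  cases h <;> rfl

lemma isNF_pairNF {a b : Term} (ha : IsNF a) (hb : IsNF b) : IsNF (pairNF a b) := by
  rcases pairNF_cases a b with ⟨-, -, h⟩ | ⟨x, rfl, -, h⟩ | ⟨hs, h⟩ <;> rw [h]
  · exact .unit
  · exact .word ha.isWord_of_comp.of_comp
  · exact .pairing ha hb hs

lemma isNF_compNF_L {b : Term} (hb : IsNF b) : IsNF (compNF L b) := by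
  cases hb with
  | unit => exact .word .left
  | word hw => rw [hw.compNF_L]; exact .word hw.consL
  | pairing ha _ _ => exact ha

lemma isNF_compNF_R {b : Term} (hb : IsNF b) : IsNF (compNF R b) := by
  cases hb with
  | unit => exact .word .right
  | word hw => rw [hw.compNF_R]; exact .word hw.consR
  | pairing _ hb _ => exact hb

lemma IsWord.isNF_compNF {w b : Term} (hw : IsWord w) (hb : IsNF b) : IsNF (compNF w b) := by
  induction hw with
  | left => exact isNF_compNF_L hb
  | right => exact isNF_compNF_R hb
  | consL _ ih => exact isNF_compNF_L ih
  | consR _ ih => exact isNF_compNF_R ih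

lemma isNF_compNF {a b : Term} (ha : IsNF a) (hb : IsNF b) : IsNF (compNF a b) := by
  induction ha with
  | unit => exact hb
  | word hw => exact hw.isNF_compNF hb
  | pairing _ _ _ ihx ihy => exact isNF_pairNF ihx ihy

lemma isNF_nf (t : Term) : IsNF (nf t) := by
  induction t with
  | I => exact .unit
  | L => exact .word .left
  | R => exact .word .right
  | comp _ _ iha ihb => exact isNF_compNF iha ihb
  | pair _ _ iha ihb => exact isNF_pairNF iha ihb

lemma compNF_L_pairNF {u : Term} (v : Term) (hu : IsNF u) : compNF L (pairNF u v) = u := by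
  rcases pairNF_cases u v with ⟨rfl, -, h⟩ | ⟨x, rfl, -, h⟩ | ⟨-, h⟩ <;> rw [h]
  · rfl
  · exact hu.isWord_of_comp.of_comp.compNF_L
  · rfl

lemma compNF_R_pairNF (u : Term) {v : Term} (hv : IsNF v) : compNF R (pairNF u v) = v := by
  rcases pairNF_cases u v with ⟨-, rfl, h⟩ | ⟨x, -, rfl, h⟩ | ⟨-, h⟩ <;> rw [h]
  · rfl
  · exact hv.isWord_of_comp.of_comp.compNF_R
  · rfl

lemma IsWord.compNF_I {w : Term} (hw : IsWord w) : compNF w I = w := by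
  induction hw with
  | left | right => rfl
  | consL hw ih => exact (congrArg (compNF L) ih).trans hw.compNF_L
  | consR hw ih => exact (congrArg (compNF R) ih).trans hw.compNF_R

lemma compNF_I {a : Term} (ha : IsNF a) : compNF a I = a := by
  induction ha with
  | unit => rfl
  | word hw => exact hw.compNF_I
  | pairing _ _ hs ihx ihy =>
    exact (congrArg₂ pairNF ihx ihy).trans (pairNF_of_not_isSurjPair hs)

lemma pairNF_compNF_L_compNF_R {a : Term} (ha : IsNF a) :
    pairNF (compNF L a) (compNF R a) = a := by
  cases ha with
  | unit => rfl
  | word hw => rw [hw.compNF_L, hw.compNF_R]; simp only [pairNF, if_true]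
  | pairing _ _ hs => exact pairNF_of_not_isSurjPair hs

lemma compNF_pairNF {u c : Term} (v : Term) (hu : IsNF u) (hc : IsNF c) :
    compNF (pairNF u v) c = pairNF (compNF u c) (compNF v c) := by
  rcases pairNF_cases u v with ⟨rfl, rfl, h⟩ | ⟨x, rfl, rfl, h⟩ | ⟨-, h⟩ <;> rw [h]
  · exact (pairNF_compNF_L_compNF_R hc).symm
  · exact (pairNF_compNF_L_compNF_R (isNF_compNF (.word hu.isWord_of_comp.of_comp) hc)).symm
  · rfl

lemma compNF_L_assoc {b c : Term} (hb : IsNF b) (hc : IsNF c) :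
    compNF (compNF L b) c = compNF L (compNF b c) := by
  cases hb with
  | unit => rfl
  | word hw => rw [hw.compNF_L]; rfl
  | pairing hx _ _ => exact (compNF_L_pairNF _ (isNF_compNF hx hc)).symm

lemma compNF_R_assoc {b c : Term} (hb : IsNF b) (hc : IsNF c) :
    compNF (compNF R b) c = compNF R (compNF b c) := by
  cases hb with
  | unit => rfl
  | word hw => rw [hw.compNF_R]; rfl
  | pairing _ hy _ => exact (compNF_R_pairNF _ (isNF_compNF hy hc)).symm

lemma IsWord.compNF_assoc {w b c : Term} (hw : IsWord w) (hb : IsNF b) (hc : IsNF c) :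
    compNF (compNF w b) c = compNF w (compNF b c) := by
  induction hw with
  | left => exact compNF_L_assoc hb hc
  | right => exact compNF_R_assoc hb hc
  | consL hw ih => exact (compNF_L_assoc (hw.isNF_compNF hb) hc).trans (congrArg _ ih)
  | consR hw ih => exact (compNF_R_assoc (hw.isNF_compNF hb) hc).trans (congrArg _ ih)

lemma compNF_assoc {a b c : Term} (ha : IsNF a) (hb : IsNF b) (hc : IsNF c) :
    compNF (compNF a b) c = compNF a (compNF b c) := by
  induction ha with
  | unit => rfl
  | word hw => exact hw.compNF_assoc hb hc
  | pairing hx _ _ ihx ihy =>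
    exact (compNF_pairNF _ (isNF_compNF hx hb) hc).trans (congrArg₂ pairNF ihx ihy)

lemma AssocEq.nf_eq {a b : Term} (h : AssocEq a b) : nf a = nf b := by
  induction h with
  | assoc a b c => exact compNF_assoc (isNF_nf a) (isNF_nf b) (isNF_nf c)
  | refl => rfl
  | symm _ ih => exact ih.symm
  | trans _ _ ih₁ ih₂ => exact ih₁.trans ih₂
  | comp_congr _ _ ih₁ ih₂ => exact congrArg₂ compNF ih₁ ih₂
  | pair_congr _ _ ih₁ ih₂ => exact congrArg₂ pairNF ih₁ ih₂

lemma Rule.nf_eq {n : ℕ} {s t : Term} : Rule n s t → nf s = nf t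
  | r1 x _ => compNF_L_pairNF _ (isNF_nf x)
  | r2 _ y => compNF_R_pairNF _ (isNF_nf y)
  | r3 x _ z => compNF_pairNF _ (isNF_nf x) (isNF_nf z)
  | r4 _ | r7 => rfl
  | r5 x => compNF_I (isNF_nf x)
  | r6 x => pairNF_compNF_L_compNF_R (isNF_nf x)

lemma Step.nf_eq {J : Set ℕ} {a b : Term} (h : Step J a b) : nf a = nf b := by
  induction h with
  | rule _ hr => exact hr.nf_eq
  | comp_left _ ih | comp_right _ ih => simp only [nf, ih]
  | pair_left _ ih | pair_right _ ih => simp only [nf, ih]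

lemma StepA.nf_eq {J : Set ℕ} {a b : Term} (h : StepA J a b) : nf a = nf b := by
  obtain ⟨a', b', ha, hs, hb⟩ := h
  rw [ha.nf_eq, hs.nf_eq, hb.nf_eq]

lemma Red.nf_eq {J : Set ℕ} {a b : Term} (h : Red J a b) : nf a = nf b := by
  obtain ⟨c, hac, hcb⟩ := h
  rw [← hcb.nf_eq]
  clear hcb
  induction hac with
  | refl => rfl
  | tail _ hs ih => exact ih.trans hs.nf_eq

section Reduction

variable {J : Set ℕ}

lemma Red.of_assocEq {a b : Term} (h : AssocEq a b) : Red J a b := ⟨a, .refl, h⟩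

lemma Red.rfl {a : Term} : Red J a a := .of_assocEq (.refl a)

lemma Red.trans {a b c : Term} (hab : Red J a b) (hbc : Red J b c) : Red J a c := by
  obtain ⟨d, had, hdb⟩ := hab
  obtain ⟨e, hbe, hec⟩ := hbc
  rcases hbe.cases_head with rfl | ⟨x, ⟨b', x', hbb', hs, hx⟩, hxe⟩
  · exact ⟨d, had, hdb.trans hec⟩
  · exact ⟨e, had.tail ⟨b', x', hdb.trans hbb', hs, hx⟩ |>.trans hxe, hec⟩

lemma Red.map {f : Term → Term} (hf : ∀ {a b}, AssocEq a b → AssocEq (f a) (f b))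
    (hs : ∀ {a b}, Step J a b → Step J (f a) (f b)) {a b : Term} (h : Red J a b) :
    Red J (f a) (f b) := by
  obtain ⟨c, hac, hcb⟩ := h
  refine ⟨f c, hac.lift f fun x y ⟨x', y', hx, hxy, hy⟩ => ?_, hf hcb⟩
  exact ⟨f x', f y', hf hx, hs hxy, hf hy⟩

lemma Red.comp_congr {a a' b b' : Term} (ha : Red J a a') (hb : Red J b b') :
    Red J (comp a b) (comp a' b') :=
  (ha.map (f := (comp · b)) (·.comp_congr (.refl b)) Step.comp_left).trans
    (hb.map (f := comp a') (AssocEq.comp_congr (.refl a')) Step.comp_right)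

lemma Red.pair_congr {a a' b b' : Term} (ha : Red J a a') (hb : Red J b b') :
    Red J (pair a b) (pair a' b') :=
  (ha.map (f := (pair · b)) (·.pair_congr (.refl b)) Step.pair_left).trans
    (hb.map (f := pair a') (AssocEq.pair_congr (.refl a')) Step.pair_right)

lemma NF.assocEq_of_red {v w : Term} (hv : NF J v) (h : Red J v w) : AssocEq v w := by
  obtain ⟨c, hvc, hcw⟩ := h
  rcases hvc.cases_head with rfl | ⟨x, hx, -⟩
  · exact hcw
  · exact absurd hx (hv x)

end Reduction

lemma Rule.red {n : ℕ} {s t : Term} (h : Rule n s t) : Red rules17 s t := by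
  refine .trans ⟨t, .single ⟨s, t, .refl s, .rule ?_ h, .refl t⟩, .refl t⟩ .rfl
  cases h <;> exact ⟨by norm_num, by norm_num⟩

lemma red_pairNF (a b : Term) : Red rules17 (pair a b) (pairNF a b) := by
  rcases pairNF_cases a b with ⟨rfl, rfl, h⟩ | ⟨x, rfl, rfl, h⟩ | ⟨-, h⟩ <;> rw [h]
  · exact Rule.r7.red
  · exact (Rule.r6 x).red
  · exact .rfl

lemma red_compNF_L {b : Term} (hb : IsNF b) : Red rules17 (comp L b) (compNF L b) := by
  cases hb with
  | unit => exact (Rule.r5 L).red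
  | word hw => rw [hw.compNF_L]; exact .rfl
  | pairing => exact (Rule.r1 _ _).red

lemma red_compNF_R {b : Term} (hb : IsNF b) : Red rules17 (comp R b) (compNF R b) := by
  cases hb with
  | unit => exact (Rule.r5 R).red
  | word hw => rw [hw.compNF_R]; exact .rfl
  | pairing => exact (Rule.r2 _ _).red

lemma IsWord.red_compNF {w b : Term} (hw : IsWord w) (hb : IsNF b) :
    Red rules17 (comp w b) (compNF w b) := by
  induction hw with
  | left => exact red_compNF_L hb
  | right => exact red_compNF_R hb
  | consL hw ih =>
    exact (Red.of_assocEq (.assoc _ _ _)).trans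
      ((Red.rfl.comp_congr ih).trans (red_compNF_L (hw.isNF_compNF hb)))
  | consR hw ih =>
    exact (Red.of_assocEq (.assoc _ _ _)).trans
      ((Red.rfl.comp_congr ih).trans (red_compNF_R (hw.isNF_compNF hb)))

lemma red_compNF {a b : Term} (ha : IsNF a) (hb : IsNF b) :
    Red rules17 (comp a b) (compNF a b) := by
  induction ha with
  | unit => exact (Rule.r4 b).red
  | word hw => exact hw.red_compNF hb
  | pairing _ _ _ ihx ihy =>
    exact (Rule.r3 _ _ b).red.trans ((ihx.pair_congr ihy).trans (red_pairNF _ _))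

lemma red_nf (t : Term) : Red rules17 t (nf t) := by
  induction t with
  | I | L | R => exact .rfl
  | comp a b iha ihb => exact (iha.comp_congr ihb).trans (red_compNF (isNF_nf a) (isNF_nf b))
  | pair a b iha ihb => exact (iha.pair_congr ihb).trans (red_pairNF _ _)

/-- Theorem 1(2): the rewrite system (1)-(7) is strongly normalizing (no
infinite sequence of one-step rewrites) and every term rewrites to a normal
form that is unique modulo associativity. -/
theorem strong_normalization_and_unique_normal_forms :
    (∀ f : ℕ → Term, ¬ ∀ n : ℕ, StepA rules17 (f n) (f (n + 1))) ∧
    (∀ t : Term, ∃ u : Term, Red rules17 t u ∧ NF rules17 u ∧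
      ∀ v : Term, Red rules17 t v → NF rules17 v → AssocEq v u) := by
  refine ⟨fun f hf => ?_, fun t => ⟨nf t, red_nf t, (isNF_nf t).toNF, fun v htv hv => ?_⟩⟩
  · exact (wellFounded_iff_isEmpty_descending_chain.1 (wellFounded_flip_stepA rules17)).false
      ⟨f, hf⟩
  · rw [htv.nf_eq]
    exact hv.assocEq_of_red (red_nf v)
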